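/- arXiv:1504.01492 — 8 statements merged into one kernel-verified Lean document; each statement's English description precedes it below -/
import Mathlib

section
/- Let F be a set of n×n real symmetric positive semidefinite matrices, each having trace exactly η > 0, let A be an n×n real symmetric matrix, and let γ > 0. Define p(Y) = ⟨Y, A⟩ and p_γ(Y) = p(Y) + (1/(2γ))(‖Y‖_F² − η²). If Y⋆ ∈ F satisfies p(Y⋆) ≤ p(Y) for all Y ∈ F, and Y_γ ∈ F satisfies p_γ(Y_γ) ≤ p_γ(Y) for all Y ∈ F, then 0 ≤ p(Y_γ) − p(Y⋆) ≤ η²/(2γ). -/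
/-!
Comparing `p_γ(Y_γ) ≤ p_γ(Y⋆)` gives
`p(Y_γ) - p(Y⋆) ≤ (‖Y⋆‖_F² - ‖Y_γ‖_F²) / (2γ) ≤ η² / (2γ)`,
because `‖Y‖_F ≤ trace Y = η` on the feasible set. This Frobenius bound follows entrywise from
`Y_ij² ≤ Y_ii Y_jj`, the nonnegativity of the `2 × 2` principal minors of a PSD matrix.
-/

open Matrix

namespace Matrix

theorem trace_transpose_mul_self_nonneg {m n : Type*} [Fintype m] [Fintype n]
    (Y : Matrix m n ℝ) : 0 ≤ (Yᵀ * Y).trace :=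
  (posSemidef_conjTranspose_mul_self Y).trace_nonneg

namespace PosSemidef

variable {ι : Type*} {Y : Matrix ι ι ℝ}

theorem apply_sq_le_mul_diag (hY : Y.PosSemidef) (i j : ι) : Y i j ^ 2 ≤ Y i i * Y j j := by
  have hminor := (hY.submatrix ![i, j]).det_nonneg
  have hsymm : Y j i = Y i j := by simpa using hY.isHermitian.apply i j
  simp only [det_fin_two, submatrix_apply, cons_val_zero, cons_val_one, hsymm] at hminor
  nlinarith

theorem trace_transpose_mul_self_le_sq_trace [Fintype ι] (hY : Y.PosSemidef) :
    (Yᵀ * Y).trace ≤ Y.trace ^ 2 := by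
  calc (Yᵀ * Y).trace = ∑ i, ∑ j, Y j i ^ 2 := by
        simp only [trace, diag, mul_apply, transpose_apply, sq]
    _ ≤ ∑ i, ∑ j, Y j j * Y i i :=
        Finset.sum_le_sum fun i _ ↦ Finset.sum_le_sum fun j _ ↦ hY.apply_sq_le_mul_diag j i
    _ = Y.trace ^ 2 := by
        simp only [trace, diag, sq, Finset.sum_mul_sum, mul_comm]

end PosSemidef

end Matrix

theorem penalized_sdp_gap_general {n : ℕ} (F : Set (Matrix (Fin n) (Fin n) ℝ))
    (η γ : ℝ) (hγ : 0 < γ)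
    (hF : ∀ Y ∈ F, Y.PosSemidef ∧ Y.trace = η)
    (p pγ : Matrix (Fin n) (Fin n) ℝ → ℝ)
    (hpγ : ∀ Y, pγ Y = p Y + (1 / (2 * γ)) * ((Yᵀ * Y).trace - η ^ 2))
    (Ystar Yγ : Matrix (Fin n) (Fin n) ℝ)
    (hYstar : Ystar ∈ F) (hmin : ∀ Y ∈ F, p Ystar ≤ p Y)
    (hYγ : Yγ ∈ F) (hminγ : ∀ Y ∈ F, pγ Yγ ≤ pγ Y) :
    0 ≤ p Yγ - p Ystar ∧ p Yγ - p Ystar ≤ η ^ 2 / (2 * γ) := by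
  obtain ⟨hpsd, htrace⟩ := hF Ystar hYstar
  have hstar_sq : (Ystarᵀ * Ystar).trace ≤ η ^ 2 :=
    htrace ▸ hpsd.trace_transpose_mul_self_le_sq_trace
  have hγ_sq : 0 ≤ (Yγᵀ * Yγ).trace := trace_transpose_mul_self_nonneg Yγ
  have hcompare := hminγ Ystar hYstar
  rw [hpγ, hpγ] at hcompare
  refine ⟨sub_nonneg.2 (hmin Yγ hYγ), ?_⟩
  have hc : 0 < 1 / (2 * γ) := by positivity
  rw [div_eq_mul_one_div, mul_comm]
  linarith [mul_le_mul_of_nonneg_left hstar_sq hc.le, mul_le_mul_of_nonneg_left hγ_sq hc.le]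

/-- Approximation quality of the penalized SDP objective:
`0 ≤ p(Y_γ) − p(Y⋆) ≤ η²/(2γ)`. -/
theorem penalized_sdp_gap {n : ℕ} (F : Set (Matrix (Fin n) (Fin n) ℝ))
    (A : Matrix (Fin n) (Fin n) ℝ) (hA : A.IsSymm)
    (η γ : ℝ) (hη : 0 < η) (hγ : 0 < γ)
    (hF : ∀ Y ∈ F, Y.PosSemidef ∧ Y.trace = η)
    (p pγ : Matrix (Fin n) (Fin n) ℝ → ℝ)
    (hp : ∀ Y, p Y = (Yᵀ * A).trace)
    (hpγ : ∀ Y, pγ Y = p Y + (1 / (2 * γ)) * ((Yᵀ * Y).trace - η ^ 2))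
    (Ystar Yγ : Matrix (Fin n) (Fin n) ℝ)
    (hYstar : Ystar ∈ F) (hmin : ∀ Y ∈ F, p Ystar ≤ p Y)
    (hYγ : Yγ ∈ F) (hminγ : ∀ Y ∈ F, pγ Yγ ≤ pγ Y) :
    0 ≤ p Yγ - p Ystar ∧ p Yγ - p Ystar ≤ η ^ 2 / (2 * γ) :=
  penalized_sdp_gap_general F η γ hγ hF p pγ hpγ Ystar Yγ hYstar hmin hYγ hminγ
end

section
/- Let F be a set of n×n real symmetric positive semidefinite matrices, each having trace exactly η > 0, let A be an n×n real symmetric matrix. Define p(Y) = ⟨Y, A⟩ and, for γ > 0, p_γ(Y) = p(Y) + (1/(2γ))(‖Y‖_F² − η²). Suppose Y⋆ ∈ F satisfies p(Y⋆) ≤ p(Y) for all Y ∈ F, and for each γ > 0 a matrix Y_γ ∈ F is given satisfying p_γ(Y_γ) ≤ p_γ(Y) for all Y ∈ F. Then for every ε > 0 there exists γ > 0 such that |p(Y⋆) − p(Y_γ)| ≤ ε. -/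
/-! On the feasible set the penalty `(‖Y‖_F² - η²) / (2γ)` lies in `[-η² / (2γ), 0]`, because a
positive semidefinite `Y` satisfies `0 ≤ ‖Y‖_F² ≤ (tr Y)² = η²` (the `2 × 2` principal minors give
`Y i j ^ 2 ≤ Y i i * Y j j`). Comparing the two minimizers then gives
`0 ≤ p(Y_γ) - p(Y⋆) ≤ η² / (2γ)`, which tends to `0` as `γ → ∞`. -/

open Matrix Filter

namespace Matrix.PosSemidef

variable {m : Type*} {Y : Matrix m m ℝ}

theorem sq_apply_le (hY : Y.PosSemidef) (i j : m) : Y i j ^ 2 ≤ Y i i * Y j j := by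
  classical
  have h := (hY.submatrix ![i, j]).det_nonneg
  have hsymm : Y j i = Y i j := by simpa using hY.isHermitian.apply i j
  simp only [det_fin_two, submatrix_apply, cons_val_zero, cons_val_one, hsymm] at h
  linarith [sq (Y i j)]

theorem trace_transpose_mul_self_le [Fintype m] (hY : Y.PosSemidef) :
    (Yᵀ * Y).trace ≤ Y.trace ^ 2 := by
  rw [trace, sq, trace, Finset.sum_mul_sum]
  refine Finset.sum_le_sum fun i _ => ?_
  simp only [diag_apply, mul_apply, transpose_apply]
  refine Finset.sum_le_sum fun j _ => ?_
  simpa [sq, mul_comm] using hY.sq_apply_le j i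

end Matrix.PosSemidef

theorem Matrix.trace_transpose_mul_self_nonneg_s1 {m n : Type*} [Fintype m] [Fintype n]
    (Y : Matrix m n ℝ) : 0 ≤ (Yᵀ * Y).trace :=
  (posSemidef_conjTranspose_mul_self Y).trace_nonneg

theorem abs_sub_le_of_isMinOn_of_isMinOn_add {α : Type*} {f g : α → ℝ} {s : Set α} {x y : α}
    {a b : ℝ} (hx : x ∈ s) (hy : y ∈ s) (hfx : IsMinOn f s x) (hfgy : IsMinOn (f + g) s y)
    (hg : ∀ z ∈ s, g z ∈ Set.Icc a b) : |f x - f y| ≤ b - a := by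
  have h₁ : f x ≤ f y := hfx hy
  have h₂ : f y + g y ≤ f x + g x := hfgy hx
  rw [abs_sub_comm, abs_of_nonneg (sub_nonneg.2 h₁)]
  linarith [(hg x hx).2, (hg y hy).1]

theorem penalized_sdp_approx_general {n : ℕ} (F : Set (Matrix (Fin n) (Fin n) ℝ))
    (η : ℝ)
    (hF : ∀ Y ∈ F, Y.PosSemidef ∧ Y.trace = η)
    (p : Matrix (Fin n) (Fin n) ℝ → ℝ)
    (pγ : ℝ → Matrix (Fin n) (Fin n) ℝ → ℝ)
    (hpγ : ∀ γ, 0 < γ → ∀ Y, pγ γ Y = p Y + (1 / (2 * γ)) * ((Yᵀ * Y).trace - η ^ 2))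
    (Ystar : Matrix (Fin n) (Fin n) ℝ)
    (hYstar : Ystar ∈ F) (hmin : ∀ Y ∈ F, p Ystar ≤ p Y)
    (Yγ : ℝ → Matrix (Fin n) (Fin n) ℝ)
    (hYγ : ∀ γ, 0 < γ → Yγ γ ∈ F)
    (hminγ : ∀ γ, 0 < γ → ∀ Y ∈ F, pγ γ (Yγ γ) ≤ pγ γ Y) :
    ∀ ε : ℝ, 0 < ε → ∃ γ : ℝ, 0 < γ ∧ |p Ystar - p (Yγ γ)| ≤ ε := by
  have hbound (γ : ℝ) (hγ : 0 < γ) : |p Ystar - p (Yγ γ)| ≤ η ^ 2 / (2 * γ) := by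
    have hpenalty (Y) (hY : Y ∈ F) : 1 / (2 * γ) * ((Yᵀ * Y).trace - η ^ 2) ∈
        Set.Icc (1 / (2 * γ) * (0 - η ^ 2)) (1 / (2 * γ) * (η ^ 2 - η ^ 2)) := by
      obtain ⟨hpsd, htr⟩ := hF Y hY
      have hnonneg := trace_transpose_mul_self_nonneg_s1 Y
      have hle := htr ▸ hpsd.trace_transpose_mul_self_le
      constructor <;> gcongr
    have hminγ' : IsMinOn (p + fun Y ↦ 1 / (2 * γ) * ((Yᵀ * Y).trace - η ^ 2)) F (Yγ γ) :=
      isMinOn_iff.2 fun Y hY ↦ by simpa only [Pi.add_apply, hpγ γ hγ] using hminγ γ hγ Y hY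
    exact (abs_sub_le_of_isMinOn_of_isMinOn_add hYstar (hYγ γ hγ) hmin hminγ' hpenalty).trans_eq
      (by ring)
  intro ε hε
  have hsmall : ∀ᶠ γ in atTop, 0 < γ ∧ η ^ 2 / (2 * γ) < ε :=
    (eventually_gt_atTop 0).and <| (tendsto_const_nhds.div_atTop
      (tendsto_id.const_mul_atTop two_pos)).eventually (gt_mem_nhds hε)
  obtain ⟨γ, hγ, hlt⟩ := hsmall.exists
  exact ⟨γ, hγ, (hbound γ hγ).trans hlt.le⟩

/-- Proposition 1(i): for every ε > 0 there is a penalty parameter γ > 0 such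
that the minimizer of the penalized SDP has objective value within ε of the SDP optimum. -/
theorem penalized_sdp_approx {n : ℕ} (F : Set (Matrix (Fin n) (Fin n) ℝ))
    (A : Matrix (Fin n) (Fin n) ℝ) (hA : A.IsSymm)
    (η : ℝ) (hη : 0 < η)
    (hF : ∀ Y ∈ F, Y.PosSemidef ∧ Y.trace = η)
    (p : Matrix (Fin n) (Fin n) ℝ → ℝ)
    (hp : ∀ Y, p Y = (Yᵀ * A).trace)
    (pγ : ℝ → Matrix (Fin n) (Fin n) ℝ → ℝ)
    (hpγ : ∀ γ, 0 < γ → ∀ Y, pγ γ Y = p Y + (1 / (2 * γ)) * ((Yᵀ * Y).trace - η ^ 2))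
    (Ystar : Matrix (Fin n) (Fin n) ℝ)
    (hYstar : Ystar ∈ F) (hmin : ∀ Y ∈ F, p Ystar ≤ p Y)
    (Yγ : ℝ → Matrix (Fin n) (Fin n) ℝ)
    (hYγ : ∀ γ, 0 < γ → Yγ γ ∈ F)
    (hminγ : ∀ γ, 0 < γ → ∀ Y ∈ F, pγ γ (Yγ γ) ≤ pγ γ Y) :
    ∀ ε : ℝ, 0 < ε → ∃ γ : ℝ, 0 < γ ∧ |p Ystar - p (Yγ γ)| ≤ ε :=
  penalized_sdp_approx_general F η hF p pγ hpγ Ystar hYstar hmin Yγ hYγ hminγ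
end

section
/- Let F be a set of n×n real symmetric positive semidefinite matrices, each having trace exactly η > 0, let A be an n×n real symmetric matrix, and let 0 < γ₁ < γ₂. Define p(Y) = ⟨Y, A⟩ and p_γ(Y) = p(Y) + (1/(2γ))(‖Y‖_F² − η²). If Y_{γ₁} ∈ F satisfies p_{γ₁}(Y_{γ₁}) ≤ p_{γ₁}(Y) for all Y ∈ F, and Y_{γ₂} ∈ F satisfies p_{γ₂}(Y_{γ₂}) ≤ p_{γ₂}(Y) for all Y ∈ F, then p(Y_{γ₁}) ≥ p(Y_{γ₂}). -/
/-!
Exchange argument: comparing each minimizer with the other one and adding the two inequalities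
shows that the penalty `‖Y‖_F² - η²` can only decrease when its weight `1 / (2γ)` increases;
minimality for the smaller weight then forces the linear objective to move the other way.
-/

open Matrix

section PenaltyExchange

variable {α : Type*} {S : Set α} {p q : α → ℝ} {c₁ c₂ : ℝ} {x₁ x₂ : α}

theorem penalty_le_of_isMinOn_of_weight_lt (hc : c₂ < c₁)
    (h₁ : IsMinOn (fun x => p x + c₁ * q x) S x₁) (h₂ : IsMinOn (fun x => p x + c₂ * q x) S x₂)
    (hx₁ : x₁ ∈ S) (hx₂ : x₂ ∈ S) : q x₁ ≤ q x₂ := by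
  have e₁ : p x₁ + c₁ * q x₁ ≤ p x₂ + c₁ * q x₂ := h₁ hx₂
  have e₂ : p x₂ + c₂ * q x₂ ≤ p x₁ + c₂ * q x₁ := h₂ hx₁
  have : (c₁ - c₂) * (q x₁ - q x₂) ≤ 0 := by linarith
  exact sub_nonpos.mp (nonpos_of_mul_nonpos_right this (sub_pos.mpr hc))

theorem objective_le_of_isMinOn_of_weight_lt (hc : c₂ < c₁) (hc₂ : 0 ≤ c₂)
    (h₁ : IsMinOn (fun x => p x + c₁ * q x) S x₁) (h₂ : IsMinOn (fun x => p x + c₂ * q x) S x₂)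
    (hx₁ : x₁ ∈ S) (hx₂ : x₂ ∈ S) : p x₂ ≤ p x₁ := by
  have e₂ : p x₂ + c₂ * q x₂ ≤ p x₁ + c₂ * q x₁ := h₂ hx₁
  have : c₂ * q x₁ ≤ c₂ * q x₂ :=
    mul_le_mul_of_nonneg_left (penalty_le_of_isMinOn_of_weight_lt hc h₁ h₂ hx₁ hx₂) hc₂
  linarith

end PenaltyExchange

theorem penalized_sdp_monotone_general {n : ℕ} (F : Set (Matrix (Fin n) (Fin n) ℝ))
    (η γ₁ γ₂ : ℝ) (hγ₁ : 0 < γ₁) (hγ₁₂ : γ₁ < γ₂)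
    (p : Matrix (Fin n) (Fin n) ℝ → ℝ)
    (pγ : ℝ → Matrix (Fin n) (Fin n) ℝ → ℝ)
    (hpγ : ∀ γ, 0 < γ → ∀ Y, pγ γ Y = p Y + (1 / (2 * γ)) * ((Yᵀ * Y).trace - η ^ 2))
    (Y₁ Y₂ : Matrix (Fin n) (Fin n) ℝ)
    (hY₁ : Y₁ ∈ F) (hmin₁ : ∀ Y ∈ F, pγ γ₁ Y₁ ≤ pγ γ₁ Y)
    (hY₂ : Y₂ ∈ F) (hmin₂ : ∀ Y ∈ F, pγ γ₂ Y₂ ≤ pγ γ₂ Y) :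
    p Y₁ ≥ p Y₂ := by
  have hγ₂ : 0 < γ₂ := hγ₁.trans hγ₁₂
  have isMinOn_of_min {γ : ℝ} (hγ : 0 < γ) {Y₀ : Matrix (Fin n) (Fin n) ℝ}
      (hmin : ∀ Y ∈ F, pγ γ Y₀ ≤ pγ γ Y) :
      IsMinOn (fun Y => p Y + 1 / (2 * γ) * ((Yᵀ * Y).trace - η ^ 2)) F Y₀ :=
    isMinOn_iff.mpr fun Y hY => by simpa only [hpγ γ hγ] using hmin Y hY
  have hweight : 1 / (2 * γ₂) < 1 / (2 * γ₁) := one_div_lt_one_div_of_lt (by positivity) (by linarith)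
  exact objective_le_of_isMinOn_of_weight_lt hweight (by positivity)
    (isMinOn_of_min hγ₁ hmin₁) (isMinOn_of_min hγ₂ hmin₂) hY₁ hY₂

/-- Proposition 1(ii): the linear objective value at the minimizers of the
penalized problem `p_γ` is non-increasing in the penalty parameter γ. -/
theorem penalized_sdp_monotone {n : ℕ} (F : Set (Matrix (Fin n) (Fin n) ℝ))
    (A : Matrix (Fin n) (Fin n) ℝ) (hA : A.IsSymm)
    (η γ₁ γ₂ : ℝ) (hη : 0 < η) (hγ₁ : 0 < γ₁) (hγ₁₂ : γ₁ < γ₂)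
    (hF : ∀ Y ∈ F, Y.PosSemidef ∧ Y.trace = η)
    (p : Matrix (Fin n) (Fin n) ℝ → ℝ)
    (hp : ∀ Y, p Y = (Yᵀ * A).trace)
    (pγ : ℝ → Matrix (Fin n) (Fin n) ℝ → ℝ)
    (hpγ : ∀ γ, 0 < γ → ∀ Y, pγ γ Y = p Y + (1 / (2 * γ)) * ((Yᵀ * Y).trace - η ^ 2))
    (Y₁ Y₂ : Matrix (Fin n) (Fin n) ℝ)
    (hY₁ : Y₁ ∈ F) (hmin₁ : ∀ Y ∈ F, pγ γ₁ Y₁ ≤ pγ γ₁ Y)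
    (hY₂ : Y₂ ∈ F) (hmin₂ : ∀ Y ∈ F, pγ γ₂ Y₂ ≤ pγ γ₂ Y) :
    p Y₁ ≥ p Y₂ :=
  penalized_sdp_monotone_general F η γ₁ γ₂ hγ₁ hγ₁₂ p pγ hpγ Y₁ Y₂ hY₁ hmin₁ hY₂ hmin₂
end

section
/- Let A, B₁, …, B_q be n×n real symmetric matrices, b ∈ ℝ^q, γ > 0 and η > 0. For u ∈ ℝ^q set C(u) := −A − Σ_{i=1}^q uᵢBᵢ, and let P be the positive part of C(u), i.e. P is PSD, P − C(u) is PSD, and ⟨P, P − C(u)⟩ = 0. Then for every n×n real symmetric positive semidefinite matrix Y with ⟨Y, Bᵢ⟩ = bᵢ for i = 1,…,q and trace(Y) = η, one has ⟨Y, A⟩ ≥ −(γ/2)‖P‖_F² − uᵀb − η²/(2γ). That is, the dual function value d_γ(u) := −(γ/2)‖(C(u))₊‖_F² − uᵀb − η²/(2γ) is a lower bound on the optimal value of the SDP minimizing ⟨Y, A⟩ over this feasible set, for every u and every γ > 0. -/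
/-!
Since `Y` and `P − C(u)` are positive semidefinite, `⟨Y, P − C(u)⟩ ≥ 0`; expanding `C(u)` with the
constraints `⟨Y, Bᵢ⟩ = bᵢ` turns this into `⟨Y, A⟩ ≥ −⟨Y, P⟩ − uᵀb`. Young's inequality gives
`⟨Y, P⟩ ≤ (γ/2)‖P‖_F² + ‖Y‖_F²/(2γ)`, and for positive semidefinite `Y` the bound
`|Yᵢⱼ|² ≤ Yᵢᵢ Yⱼⱼ` yields `‖Y‖_F² ≤ (trace Y)² = η²`.
-/

open Matrix
open scoped ComplexOrder

namespace Matrix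

variable {ι 𝕜 : Type*} [RCLike 𝕜]

lemma PosSemidef.trace_mul_nonneg [Fintype ι] [DecidableEq ι] {X Z : Matrix ι ι 𝕜}
    (hX : X.PosSemidef) (hZ : Z.PosSemidef) : 0 ≤ (X * Z).trace := by
  open MatrixOrder in
  obtain ⟨S, rfl⟩ := CStarAlgebra.nonneg_iff_eq_star_mul_self.mp hX.nonneg
  rw [star_eq_conjTranspose, Matrix.mul_assoc, trace_mul_comm]
  exact (hZ.mul_mul_conjTranspose_same S).trace_nonneg

lemma PosSemidef.apply_mul_apply_le {Y : Matrix ι ι 𝕜} (hY : Y.PosSemidef) (i j : ι) :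
    Y i j * Y j i ≤ Y i i * Y j j := by
  have h := (hY.submatrix ![i, j]).det_nonneg
  rw [det_fin_two] at h
  simpa [sub_nonneg] using h

lemma PosSemidef.trace_mul_self_le_sq_trace [Fintype ι] {Y : Matrix ι ι 𝕜} (hY : Y.PosSemidef) :
    (Y * Y).trace ≤ Y.trace ^ 2 := by
  simp only [trace, diag, mul_apply, sq, Finset.sum_mul_sum]
  exact Finset.sum_le_sum fun i _ => Finset.sum_le_sum fun j _ => hY.apply_mul_apply_le i j

lemma trace_transpose_mul_le {m n : Type*} [Fintype m] [Fintype n]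
    (X Z : Matrix m n ℝ) {γ : ℝ} (hγ : 0 < γ) :
    (Xᵀ * Z).trace ≤ γ / 2 * (Zᵀ * Z).trace + (Xᵀ * X).trace / (2 * γ) := by
  have hsq : 0 ≤ ((γ • Z - X)ᵀ * (γ • Z - X)).trace := by
    simpa [conjTranspose_eq_transpose_of_trivial] using
      (posSemidef_conjTranspose_mul_self (γ • Z - X)).trace_nonneg
  have htrace_comm : (Zᵀ * X).trace = (Xᵀ * Z).trace := by
    rw [← trace_transpose, transpose_mul, transpose_transpose]
  have hexp : ((γ • Z - X)ᵀ * (γ • Z - X)).trace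
      = γ ^ 2 * (Zᵀ * Z).trace - 2 * γ * (Xᵀ * Z).trace + (Xᵀ * X).trace := by
    simp only [transpose_sub, transpose_smul, Matrix.sub_mul, Matrix.mul_sub, Matrix.smul_mul,
      Matrix.mul_smul, trace_sub, trace_smul, smul_eq_mul, htrace_comm]
    ring
  have hscale : 2 * γ * (γ / 2 * (Zᵀ * Z).trace + (Xᵀ * X).trace / (2 * γ))
      = γ ^ 2 * (Zᵀ * Z).trace + (Xᵀ * X).trace := by
    field_simp
  rw [← mul_le_mul_iff_right₀ (by positivity : 0 < 2 * γ), hscale]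
  linarith

end Matrix

theorem sdp_dual_lower_bound_general {n q : ℕ}
    (A : Matrix (Fin n) (Fin n) ℝ)
    (B : Fin q → Matrix (Fin n) (Fin n) ℝ)
    (b : Fin q → ℝ) (γ η : ℝ) (hγ : 0 < γ)
    (u : Fin q → ℝ) (P : Matrix (Fin n) (Fin n) ℝ)
    (hPC : (P - (-A - ∑ i, u i • B i)).PosSemidef) :
    ∀ Y : Matrix (Fin n) (Fin n) ℝ, Y.PosSemidef →
      (∀ i, (Yᵀ * B i).trace = b i) → Y.trace = η →
      (Yᵀ * A).trace ≥ -(γ / 2) * (Pᵀ * P).trace - (∑ i, u i * b i) - η ^ 2 / (2 * γ) := by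
  intro Y hY hYB hYtr
  have hYsymm : Yᵀ = Y := by
    simpa [conjTranspose_eq_transpose_of_trivial] using hY.isHermitian.eq
  have hgap : 0 ≤ (Yᵀ * (P - (-A - ∑ i, u i • B i))).trace := hY.transpose.trace_mul_nonneg hPC
  have hgap_eq : (Yᵀ * (P - (-A - ∑ i, u i • B i))).trace
      = (Yᵀ * P).trace + (Yᵀ * A).trace + ∑ i, u i * b i := by
    simp only [Matrix.mul_sub, Matrix.mul_neg, Matrix.mul_sum, Matrix.mul_smul, trace_sub,
      trace_neg, trace_sum, trace_smul, smul_eq_mul, hYB]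
    ring
  have hyoung := trace_transpose_mul_le Y P hγ
  have hfrob : (Yᵀ * Y).trace ≤ η ^ 2 := by
    rw [hYsymm, ← hYtr]
    exact hY.trace_mul_self_le_sq_trace
  have hfrob_div : (Yᵀ * Y).trace / (2 * γ) ≤ η ^ 2 / (2 * γ) := by gcongr
  linarith

/-- Proposition 3: weak duality — for every dual variable `u` and every γ > 0,
the dual function value `d_γ(u) = −(γ/2)‖(C(u))₊‖_F² − uᵀb − η²/(2γ)` is a lower bound on
the SDP objective `⟨Y, A⟩` over the feasible set. -/
theorem sdp_dual_lower_bound {n q : ℕ}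
    (A : Matrix (Fin n) (Fin n) ℝ) (hA : A.IsSymm)
    (B : Fin q → Matrix (Fin n) (Fin n) ℝ) (hB : ∀ i, (B i).IsSymm)
    (b : Fin q → ℝ) (γ η : ℝ) (hγ : 0 < γ) (hη : 0 < η)
    (u : Fin q → ℝ) (P : Matrix (Fin n) (Fin n) ℝ)
    (hP : P.PosSemidef)
    (hPC : (P - (-A - ∑ i, u i • B i)).PosSemidef)
    (horth : (Pᵀ * (P - (-A - ∑ i, u i • B i))).trace = 0) :
    ∀ Y : Matrix (Fin n) (Fin n) ℝ, Y.PosSemidef →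
      (∀ i, (Yᵀ * B i).trace = b i) → Y.trace = η →
      (Yᵀ * A).trace ≥ -(γ / 2) * (Pᵀ * P).trace - (∑ i, u i * b i) - η ^ 2 / (2 * γ) :=
  sdp_dual_lower_bound_general A B b γ η hγ u P hPC
end

section
/- Let A, B₁, …, B_q be n×n real symmetric matrices, b ∈ ℝ^q and γ > 0, and for u ∈ ℝ^q set C(u) := −A − Σ_{i=1}^q uᵢBᵢ. Let u⋆ ∈ ℝ^q and let P⋆ be the positive part of C(u⋆) (P⋆ is PSD, P⋆ − C(u⋆) is PSD, ⟨P⋆, P⋆ − C(u⋆)⟩ = 0). Suppose the stationarity conditions γ⟨P⋆, Bᵢ⟩ = bᵢ hold for i = 1,…,q. Then Y⋆ := γP⋆ is positive semidefinite, satisfies ⟨Y⋆, Bᵢ⟩ = bᵢ for all i, and for every η > 0 and every positive semidefinite Y with ⟨Y, Bᵢ⟩ = bᵢ for all i and trace(Y) = η one has p_γ(Y⋆) ≤ p_γ(Y), where p_γ(Y) := ⟨Y, A⟩ + (1/(2γ))(‖Y‖_F² − η²). In other words, the primal optimal solution of the penalized SDP is recovered from the dual optimum by Y⋆ = γ(C(u⋆))₊.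 -/
/-!
Write `⟨X, Y⟩ = tr(XᵀY)`, `P = P⋆`, `C = C(u⋆)` and `S = Σ u⋆ᵢ Bᵢ`, so that `C = -A - S`.
The objective `p_γ` is a strongly convex quadratic, and
`p_γ(Y) - p_γ(X) = ‖Y - X‖²/(2γ) + ⟨Y - X, γA + X⟩/γ`;
hence `X = γP` is a minimizer as soon as `⟨Y - γP, A + P⟩ ≥ 0` for every feasible `Y`.
Now `A + P = (P - C) - S`. The term with `S` vanishes because `Y` and `γP` satisfy the same
linear constraints, and `⟨Y - γP, P - C⟩ = ⟨Y, P - C⟩ ≥ 0` by complementarity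
`⟨P, P - C⟩ = 0` and because the trace of a product of two PSD matrices is nonnegative.
-/

open Matrix

namespace Matrix

variable {n : Type*} [Fintype n]

open scoped ComplexOrder in
theorem PosSemidef.trace_mul_nonneg_s5 {𝕜 : Type*} [RCLike 𝕜] {X Y : Matrix n n 𝕜}
    (hX : X.PosSemidef) (hY : Y.PosSemidef) : 0 ≤ (X * Y).trace := by
  classical
  open scoped MatrixOrder in
  obtain ⟨C, rfl⟩ := CStarAlgebra.nonneg_iff_eq_star_mul_self.mp hX.nonneg
  rw [star_eq_conjTranspose, Matrix.mul_assoc, trace_mul_comm]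
  exact (hY.mul_mul_conjTranspose_same C).trace_nonneg

theorem PosSemidef.trace_transpose_mul_nonneg {X Y : Matrix n n ℝ}
    (hX : X.PosSemidef) (hY : Y.PosSemidef) : 0 ≤ (Xᵀ * Y).trace := by
  rw [← conjTranspose_eq_transpose_of_trivial, hX.1.eq]
  exact hX.trace_mul_nonneg_s5 hY

theorem trace_transpose_mul_comm {m R : Type*} [Fintype m] [CommSemiring R]
    (X Y : Matrix m n R) : (Xᵀ * Y).trace = (Yᵀ * X).trace := by
  rw [← trace_transpose, transpose_mul, transpose_transpose]

theorem trace_transpose_mul_sum_smul_eq_zero {m ι R : Type*} [Fintype m] [Fintype ι]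
    [CommSemiring R] {Z : Matrix m n R} {B : ι → Matrix m n R}
    (hZ : ∀ i, (Zᵀ * B i).trace = 0) (u : ι → R) : (Zᵀ * ∑ i, u i • B i).trace = 0 := by
  simp [Matrix.mul_sum, trace_sum, hZ]

end Matrix

noncomputable def penalizedObjective {n : Type*} [Fintype n] (γ η : ℝ)
    (A Y : Matrix n n ℝ) : ℝ :=
  (Yᵀ * A).trace + (1 / (2 * γ)) * ((Yᵀ * Y).trace - η ^ 2)

section penalizedObjective

variable {n : Type*} [Fintype n] {γ : ℝ} (η : ℝ) (A : Matrix n n ℝ)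

theorem penalizedObjective_sub_eq (hγ : γ ≠ 0) (X Y : Matrix n n ℝ) :
    penalizedObjective γ η A Y - penalizedObjective γ η A X =
      (1 / (2 * γ)) * ((Y - X)ᵀ * (Y - X)).trace + (1 / γ) * ((Y - X)ᵀ * (γ • A + X)).trace := by
  have hXY := trace_transpose_mul_comm X Y
  simp only [penalizedObjective, transpose_sub, Matrix.sub_mul, Matrix.mul_sub, Matrix.mul_add, Matrix.mul_smul,
    trace_sub, trace_add, trace_smul, smul_eq_mul] at hXY ⊢
  field_simp
  linear_combination hXY

theorem penalizedObjective_le_of_trace_mul_nonneg (hγ : 0 < γ) {X Y : Matrix n n ℝ}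
    (h : 0 ≤ ((Y - X)ᵀ * (γ • A + X)).trace) :
    penalizedObjective γ η A X ≤ penalizedObjective γ η A Y := by
  have hsq : 0 ≤ ((Y - X)ᵀ * (Y - X)).trace := by
    simpa [conjTranspose_eq_transpose_of_trivial] using
      (posSemidef_conjTranspose_mul_self (Y - X)).trace_nonneg
  rw [← sub_nonneg, penalizedObjective_sub_eq η A hγ.ne']
  positivity

end penalizedObjective

theorem sdp_primal_from_dual_general {n q : ℕ}
    (A : Matrix (Fin n) (Fin n) ℝ)
    (B : Fin q → Matrix (Fin n) (Fin n) ℝ)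
    (b : Fin q → ℝ) (γ : ℝ) (hγ : 0 < γ)
    (ustar : Fin q → ℝ) (Pstar : Matrix (Fin n) (Fin n) ℝ)
    (hP : Pstar.PosSemidef)
    (hPC : (Pstar - (-A - ∑ i, ustar i • B i)).PosSemidef)
    (horth : (Pstarᵀ * (Pstar - (-A - ∑ i, ustar i • B i))).trace = 0)
    (hstat : ∀ i, γ * (Pstarᵀ * B i).trace = b i) :
    (γ • Pstar).PosSemidef ∧
    (∀ i, ((γ • Pstar)ᵀ * B i).trace = b i) ∧
    (∀ η : ℝ, 0 < η → ∀ Y : Matrix (Fin n) (Fin n) ℝ, Y.PosSemidef →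
      (∀ i, (Yᵀ * B i).trace = b i) → Y.trace = η →
      ((γ • Pstar)ᵀ * A).trace + (1 / (2 * γ)) * (((γ • Pstar)ᵀ * (γ • Pstar)).trace - η ^ 2)
        ≤ (Yᵀ * A).trace + (1 / (2 * γ)) * ((Yᵀ * Y).trace - η ^ 2)) := by
  set S := ∑ i, ustar i • B i
  have hfeasP : ∀ i, ((γ • Pstar)ᵀ * B i).trace = b i := fun i => by
    rw [transpose_smul, Matrix.smul_mul, trace_smul, smul_eq_mul, hstat i]
  refine ⟨hP.smul hγ.le, hfeasP, fun η _ Y hY hfeas _ => ?_⟩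
  refine penalizedObjective_le_of_trace_mul_nonneg η A hγ ?_
  have hS : ((Y - γ • Pstar)ᵀ * S).trace = 0 :=
    trace_transpose_mul_sum_smul_eq_zero (fun i => by
      rw [transpose_sub, Matrix.sub_mul, trace_sub, hfeas, hfeasP, sub_self]) ustar
  have hYPC : 0 ≤ (Yᵀ * (Pstar - (-A - S))).trace := hY.trace_transpose_mul_nonneg hPC
  have hsplit : γ • A + γ • Pstar = γ • (Pstar - (-A - S)) - γ • S := by
    simp only [smul_sub, smul_neg]; abel
  rw [hsplit, Matrix.mul_sub, trace_sub, Matrix.mul_smul, Matrix.mul_smul, trace_smul, trace_smul,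
    hS, transpose_sub, Matrix.sub_mul, trace_sub, transpose_smul, Matrix.smul_mul, trace_smul,
    horth]
  simpa using mul_nonneg hγ.le hYPC

/-- if the dual stationarity conditions `γ⟨(C(u⋆))₊, Bᵢ⟩ = bᵢ` hold, then
`Y⋆ := γ(C(u⋆))₊` is PSD, feasible for the linear constraints, and minimizes the penalized
objective `p_γ` over the feasible set. -/
theorem sdp_primal_from_dual {n q : ℕ}
    (A : Matrix (Fin n) (Fin n) ℝ) (hA : A.IsSymm)
    (B : Fin q → Matrix (Fin n) (Fin n) ℝ) (hB : ∀ i, (B i).IsSymm)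
    (b : Fin q → ℝ) (γ : ℝ) (hγ : 0 < γ)
    (ustar : Fin q → ℝ) (Pstar : Matrix (Fin n) (Fin n) ℝ)
    (hP : Pstar.PosSemidef)
    (hPC : (Pstar - (-A - ∑ i, ustar i • B i)).PosSemidef)
    (horth : (Pstarᵀ * (Pstar - (-A - ∑ i, ustar i • B i))).trace = 0)
    (hstat : ∀ i, γ * (Pstarᵀ * B i).trace = b i) :
    (γ • Pstar).PosSemidef ∧
    (∀ i, ((γ • Pstar)ᵀ * B i).trace = b i) ∧
    (∀ η : ℝ, 0 < η → ∀ Y : Matrix (Fin n) (Fin n) ℝ, Y.PosSemidef →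
      (∀ i, (Yᵀ * B i).trace = b i) → Y.trace = η →
      ((γ • Pstar)ᵀ * A).trace + (1 / (2 * γ)) * (((γ • Pstar)ᵀ * (γ • Pstar)).trace - η ^ 2)
        ≤ (Yᵀ * A).trace + (1 / (2 * γ)) * ((Yᵀ * Y).trace - η ^ 2)) :=
  sdp_primal_from_dual_general A B b γ hγ ustar Pstar hP hPC horth hstat
end

section
/- Let N, L ≥ 1, let ψ : Fin N → Fin L → ℝ, and let K be an N×N real symmetric matrix. For a labeling x : Fin N → Fin L define the indicator matrix X ∈ ℝ^{N×L} by X_{i,l} = 1 if x(i) = l and X_{i,l} = 0 otherwise, and let H ∈ ℝ^{N×L} with H_{i,l} = ψ(i)(l). Then Σ_{i} ψ(i)(x(i)) + Σ_{i<j} [x(i) ≠ x(j)]·K_{i,j} = ⟨H, X⟩ − (1/2)⟨XXᵀ, K⟩ + (1/2)·𝟏ᵀK𝟏, where [x(i) ≠ x(j)] is 1 if x(i) ≠ x(j) and 0 otherwise, and 𝟏 ∈ ℝ^N is the all-ones vector. -/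
/-!
With `X` the indicator matrix of the labeling, `⟨H, X⟩` picks out the unary terms `ψ i (x i)` and
`(X Xᵀ) i j = [x i = x j]`, so `⟨X Xᵀ, K⟩` is the part of `∑ i j, K i j` that the Potts penalty
`[x i ≠ x j] K i j` leaves out. Since `K` is symmetric and the penalty vanishes on the diagonal,
the sum over pairs `i < j` is half the sum over all `(i, j)`.
-/

open Matrix Finset

theorem Finset.sum_sum_eq_two_nsmul_sum_sum_ite_lt {ι M : Type*} [Fintype ι] [LinearOrder ι]
    [AddCommMonoid M] (f : ι → ι → M) (hf : ∀ i j, f i j = f j i) (hdiag : ∀ i, f i i = 0) :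
    ∑ i, ∑ j, f i j = 2 • ∑ i, ∑ j, if i < j then f i j else 0 := by
  have hsplit : ∀ i j,
      f i j = (if i < j then f i j else 0) + (if j < i then f j i else 0) := by
    intro i j
    rcases lt_trichotomy i j with h | rfl | h
    · simp [h, h.not_gt]
    · simp [hdiag]
    · simpa [h, h.not_gt] using hf i j
  calc ∑ i, ∑ j, f i j
      = ∑ i, ∑ j, ((if i < j then f i j else 0) + (if j < i then f j i else 0)) :=
        sum_congr rfl fun i _ => sum_congr rfl fun j _ => hsplit i j
    _ = ∑ i, ∑ j, (if i < j then f i j else 0) + ∑ i, ∑ j, (if i < j then f i j else 0) := by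
        simp only [sum_add_distrib]
        rw [sum_comm (γ := ι) (f := fun i j => if j < i then f j i else 0)]
    _ = 2 • ∑ i, ∑ j, if i < j then f i j else 0 := (two_nsmul _).symm

theorem Matrix.trace_transpose_mul_eq_sum_sum {m n R : Type*} [Fintype m] [Fintype n]
    [AddCommMonoid R] [Mul R] (A B : Matrix m n R) :
    (Aᵀ * B).trace = ∑ i, ∑ j, A i j * B i j := by
  simp only [trace, diag, mul_apply, transpose_apply]
  exact sum_comm

section Indicator

variable {ι κ R : Type*} [Fintype κ] [DecidableEq κ] [NonAssocSemiring R]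
  {x : ι → κ} {X : Matrix ι κ R}

theorem trace_transpose_mul_indicator [Fintype ι] (hX : ∀ i l, X i l = if x i = l then 1 else 0)
    (H : Matrix ι κ R) : (Hᵀ * X).trace = ∑ i, H i (x i) := by
  simp [trace_transpose_mul_eq_sum_sum, hX]

theorem indicator_mul_transpose_apply (hX : ∀ i l, X i l = if x i = l then 1 else 0)
    (i j : ι) : (X * Xᵀ) i j = if x i = x j then 1 else 0 := by
  simp [mul_apply, hX, eq_comm]

end Indicator

theorem potts_energy_quadratic_form_general {N L : ℕ}
    (ψ : Fin N → Fin L → ℝ) (K : Matrix (Fin N) (Fin N) ℝ) (hK : K.IsSymm)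
    (x : Fin N → Fin L)
    (X : Matrix (Fin N) (Fin L) ℝ) (hX : ∀ i l, X i l = if x i = l then 1 else 0)
    (H : Matrix (Fin N) (Fin L) ℝ) (hH : ∀ i l, H i l = ψ i l) :
    (∑ i, ψ i (x i)) + (∑ i, ∑ j, if i < j then (if x i ≠ x j then K i j else 0) else 0)
      = (Hᵀ * X).trace - (1 / 2) * ((X * Xᵀ)ᵀ * K).trace
        + (1 / 2) * (∑ i, ∑ j, K i j) := by
  have hpairs := sum_sum_eq_two_nsmul_sum_sum_ite_lt (fun i j => if x i ≠ x j then K i j else 0)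
    (fun i j => by simp only [ne_comm, hK.apply i j]) (fun i => by simp)
  have hpenalty : ∑ i, ∑ j, (if x i ≠ x j then K i j else 0)
      = ∑ i, ∑ j, K i j - ∑ i, ∑ j, (X * Xᵀ) i j * K i j := by
    simp only [indicator_mul_transpose_apply hX, ← sum_sub_distrib]
    refine sum_congr rfl fun i _ => sum_congr rfl fun j _ => ?_
    by_cases h : x i = x j <;> simp [h]
  rw [trace_transpose_mul_indicator hX, trace_transpose_mul_eq_sum_sum]
  simp only [hH]
  rw [two_nsmul] at hpairs
  linarith

/-- the Potts-model CRF energy equals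
`⟨H, X⟩ − (1/2)⟨XXᵀ, K⟩ + (1/2)𝟏ᵀK𝟏` for the 0/1 indicator matrix `X` of the labeling. -/
theorem potts_energy_quadratic_form {N L : ℕ} (hN : 1 ≤ N) (hL : 1 ≤ L)
    (ψ : Fin N → Fin L → ℝ) (K : Matrix (Fin N) (Fin N) ℝ) (hK : K.IsSymm)
    (x : Fin N → Fin L)
    (X : Matrix (Fin N) (Fin L) ℝ) (hX : ∀ i l, X i l = if x i = l then 1 else 0)
    (H : Matrix (Fin N) (Fin L) ℝ) (hH : ∀ i l, H i l = ψ i l) :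
    (∑ i, ψ i (x i)) + (∑ i, ∑ j, if i < j then (if x i ≠ x j then K i j else 0) else 0)
      = (Hᵀ * X).trace - (1 / 2) * ((X * Xᵀ)ᵀ * K).trace
        + (1 / 2) * (∑ i, ∑ j, K i j) :=
  potts_energy_quadratic_form_general ψ K hK x X hX H hH
end

section
/- Let N, L ≥ 1, let ψ : Fin N → Fin L → ℝ, let K be an N×N real symmetric matrix, and let μ : Fin L → Fin L → ℝ satisfy μ(l, l′) = μ(l′, l) for all l, l′ and μ(l, l) = 0 for all l. For a labeling x : Fin N → Fin L define y ∈ ℝ^{Fin L × Fin N} by y_{(l,i)} = 1 if x(i) = l and 0 otherwise, define h ∈ ℝ^{Fin L × Fin N} by h_{(l,i)} = ψ(i)(l), and let U be the L×L matrix with U_{l,l′} = μ(l, l′) − 1. Then Σ_i ψ(i)(x(i)) + Σ_{i<j} μ(x(i), x(j))·K_{i,j} = hᵀy + (1/2)·yᵀ(U ⊗ K)y + (1/2)·𝟏ᵀK𝟏, where U ⊗ K denotes the Kronecker product, indexed so that (U ⊗ K)_{(l,i),(l′,j)} = U_{l,l′}·K_{i,j}, and 𝟏 ∈ ℝ^N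 is the all-ones vector. -/
/-!
Against the one-hot vector `y` of `x`, `h ⬝ᵥ y` picks out the unary terms `ψ i (x i)` and
`yᵀ (U ⊗ K) y = ∑ i, ∑ j, (μ (x i) (x j) - 1) * K i j`. Since `μ` vanishes on the diagonal and
`(i, j) ↦ μ (x i) (x j) * K i j` is symmetric, the full double sum is twice the sum over `i < j`.
-/

open Matrix Kronecker

section OneHot

variable {R m n : Type*} [Fintype m] [Fintype n] [DecidableEq m]

def oneHot [Zero R] [One R] (x : n → m) : m × n → R :=
  fun p => if x p.2 = p.1 then 1 else 0

theorem dotProduct_oneHot [NonAssocSemiring R] (v : m × n → R) (x : n → m) :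
    v ⬝ᵥ oneHot x = ∑ i, v (x i, i) := by
  simp only [dotProduct, oneHot, Fintype.sum_prod_type, mul_ite, mul_one, mul_zero]
  rw [Finset.sum_comm]
  simp only [Finset.sum_ite_eq, Finset.mem_univ, if_true]

theorem kronecker_mulVec_oneHot [NonAssocSemiring R] (U : Matrix m m R) (K : Matrix n n R)
    (x : n → m) (l : m) (i : n) :
    ((U ⊗ₖ K) *ᵥ oneHot x) (l, i) = ∑ j, U l (x j) * K i j :=
  dotProduct_oneHot _ x

theorem oneHot_dotProduct_kronecker_mulVec_oneHot [CommSemiring R] (U : Matrix m m R)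
    (K : Matrix n n R) (x : n → m) :
    oneHot x ⬝ᵥ ((U ⊗ₖ K) *ᵥ oneHot x) = ∑ i, ∑ j, U (x i) (x j) * K i j := by
  rw [dotProduct_comm, dotProduct_oneHot]
  simp only [kronecker_mulVec_oneHot]

end OneHot

theorem Fintype.sum_sum_eq_two_nsmul_sum_sum_of_lt {ι M : Type*} [Fintype ι] [LinearOrder ι]
    [AddCommMonoid M] (f : ι → ι → M) (hsymm : ∀ i j, f i j = f j i) (hdiag : ∀ i, f i i = 0) :
    ∑ i, ∑ j, f i j = 2 • ∑ i, ∑ j, if i < j then f i j else 0 := by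
  have split : ∀ i j, f i j = (if i < j then f i j else 0) + (if j < i then f j i else 0) := by
    intro i j
    rcases lt_trichotomy i j with hij | rfl | hij
    · simp [hij, hij.not_gt]
    · simp [hdiag]
    · simp [hij, hij.not_gt, hsymm i j]
  calc ∑ i, ∑ j, f i j
      = ∑ i, ∑ j, ((if i < j then f i j else 0) + (if j < i then f j i else 0)) :=
        Fintype.sum_congr _ _ fun i => Fintype.sum_congr _ _ (split i)
    _ = (∑ i, ∑ j, if i < j then f i j else 0) + ∑ j, ∑ i, if j < i then f j i else 0 := by
        simp only [Finset.sum_add_distrib]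
        rw [Finset.sum_comm (f := fun i j => if j < i then f j i else 0)]
    _ = 2 • ∑ i, ∑ j, if i < j then f i j else 0 := (two_nsmul _).symm

theorem general_compatibility_energy_quadratic_form_general {N L : ℕ}
    (ψ : Fin N → Fin L → ℝ) (K : Matrix (Fin N) (Fin N) ℝ) (hK : K.IsSymm)
    (μ : Fin L → Fin L → ℝ)
    (hμsymm : ∀ l l', μ l l' = μ l' l) (hμdiag : ∀ l, μ l l = 0)
    (x : Fin N → Fin L)
    (y : Fin L × Fin N → ℝ) (hy : ∀ l i, y (l, i) = if x i = l then 1 else 0)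
    (h : Fin L × Fin N → ℝ) (hh : ∀ l i, h (l, i) = ψ i l)
    (U : Matrix (Fin L) (Fin L) ℝ) (hU : ∀ l l', U l l' = μ l l' - 1) :
    (∑ i, ψ i (x i)) + (∑ i, ∑ j, if i < j then μ (x i) (x j) * K i j else 0)
      = h ⬝ᵥ y + (1 / 2) * (y ⬝ᵥ ((U ⊗ₖ K) *ᵥ y)) + (1 / 2) * (∑ i, ∑ j, K i j) := by
  obtain rfl : y = oneHot x := funext fun p => hy p.1 p.2
  have unary : h ⬝ᵥ oneHot x = ∑ i, ψ i (x i) := by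
    simp only [dotProduct_oneHot, hh]
  have pairwise : oneHot x ⬝ᵥ ((U ⊗ₖ K) *ᵥ oneHot x)
      = ∑ i, ∑ j, μ (x i) (x j) * K i j - ∑ i, ∑ j, K i j := by
    simp only [oneHot_dotProduct_kronecker_mulVec_oneHot, hU, sub_mul, one_mul,
      Finset.sum_sub_distrib]
  have halve := Fintype.sum_sum_eq_two_nsmul_sum_sum_of_lt (fun i j => μ (x i) (x j) * K i j)
    (fun i j => by rw [hμsymm, hK.apply]) (fun i => by rw [hμdiag, zero_mul])
  rw [unary, pairwise, halve, two_nsmul]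
  ring

/-- for a general symmetric label compatibility function μ vanishing on the
diagonal, the CRF energy equals `hᵀy + (1/2)yᵀ(U ⊗ K)y + (1/2)𝟏ᵀK𝟏` where
`U = [μ(l,l′) − 1]` and `y` is the vectorized 0/1 indicator of the labeling. -/
theorem general_compatibility_energy_quadratic_form {N L : ℕ} (hN : 1 ≤ N) (hL : 1 ≤ L)
    (ψ : Fin N → Fin L → ℝ) (K : Matrix (Fin N) (Fin N) ℝ) (hK : K.IsSymm)
    (μ : Fin L → Fin L → ℝ)
    (hμsymm : ∀ l l', μ l l' = μ l' l) (hμdiag : ∀ l, μ l l = 0)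
    (x : Fin N → Fin L)
    (y : Fin L × Fin N → ℝ) (hy : ∀ l i, y (l, i) = if x i = l then 1 else 0)
    (h : Fin L × Fin N → ℝ) (hh : ∀ l i, h (l, i) = ψ i l)
    (U : Matrix (Fin L) (Fin L) ℝ) (hU : ∀ l l', U l l' = μ l l' - 1) :
    (∑ i, ψ i (x i)) + (∑ i, ∑ j, if i < j then μ (x i) (x j) * K i j else 0)
      = h ⬝ᵥ y + (1 / 2) * (y ⬝ᵥ ((U ⊗ₖ K) *ᵥ y)) + (1 / 2) * (∑ i, ∑ j, K i j) :=
  general_compatibility_energy_quadratic_form_general ψ K hK μ hμsymm hμdiag x y hy h hh U hU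
end

section
/- Let Φ be an N×D real matrix, c > 0, and let Ω := I_N − (1/N)·𝟏𝟏ᵀ be the centering projection matrix (𝟏 ∈ ℝ^N the all-ones vector). Define S := Ω·Φ·(c·I_D + ΦᵀΦ)⁻¹·Φᵀ·Ω. Then Ω·(c·I_N + ΦΦᵀ)⁻¹·Ω = (1/c)·(Ω − S); moreover S is symmetric positive semidefinite and satisfies S·𝟏 = 0. -/
/-!
Push-through: `(cI + ΦΨ)Φ = Φ(cI + ΨΦ)`, which gives Woodbury's formula
`(cI + ΦΨ)⁻¹ = c⁻¹(I − Φ(cI + ΨΦ)⁻¹Ψ)`. Sandwiching it between the idempotent centering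
matrix `Ω` yields the identity. `S = (ΦᵀΩ)ᵀ (cI + ΦᵀΦ)⁻¹ (ΦᵀΩ)` is a congruence of a
positive definite matrix, and it annihilates `𝟏` because `Ω` does.
-/

open Matrix

namespace Matrix

section PushThrough

variable {m n K : Type*} [Fintype m] [Fintype n] [DecidableEq m] [DecidableEq n] [Field K]

theorem smul_one_add_mul_mul_eq (c : K) (Φ : Matrix m n K) (Ψ : Matrix n m K) :
    (c • 1 + Φ * Ψ) * Φ = Φ * (c • 1 + Ψ * Φ) := by
  simp only [Matrix.add_mul, Matrix.mul_add, Matrix.smul_mul, Matrix.mul_smul, Matrix.one_mul,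
    Matrix.mul_one, Matrix.mul_assoc]

theorem inv_smul_one_add_mul {c : K} (hc : c ≠ 0) (Φ : Matrix m n K) (Ψ : Matrix n m K)
    (hB : IsUnit (c • 1 + Ψ * Φ)) :
    (c • 1 + Φ * Ψ)⁻¹ = c⁻¹ • (1 - Φ * (c • 1 + Ψ * Φ)⁻¹ * Ψ) := by
  refine inv_eq_right_inv ?_
  have hcancel : (c • 1 + Φ * Ψ) * (Φ * (c • 1 + Ψ * Φ)⁻¹ * Ψ) = Φ * Ψ := by
    rw [← Matrix.mul_assoc, ← Matrix.mul_assoc, smul_one_add_mul_mul_eq, Matrix.mul_assoc Φ,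
      mul_nonsing_inv _ ((isUnit_iff_isUnit_det _).mp hB), Matrix.mul_one]
  rw [Matrix.mul_smul, Matrix.mul_sub, hcancel, Matrix.mul_one, add_sub_cancel_right, smul_smul,
    inv_mul_cancel₀ hc, one_smul]

end PushThrough

section Centering

variable (ι K : Type*) [Fintype ι] [DecidableEq ι] [Field K]

def centeringMatrix : Matrix ι ι K := 1 - (Fintype.card ι : K)⁻¹ • of fun _ _ => 1

variable {ι K}

theorem centeringMatrix_transpose : (centeringMatrix ι K)ᵀ = centeringMatrix ι K := by
  ext i j
  simp [centeringMatrix, one_apply, eq_comm]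

theorem isIdempotentElem_centeringMatrix [CharZero K] [Nonempty ι] :
    IsIdempotentElem (centeringMatrix ι K) := by
  refine IsIdempotentElem.one_sub ?_
  ext i j
  simp [mul_apply]

theorem centeringMatrix_mulVec_one [CharZero K] [Nonempty ι] :
    centeringMatrix ι K *ᵥ (fun _ => 1) = 0 := by
  have hcard : (Fintype.card ι : K) ≠ 0 := Nat.cast_ne_zero.mpr Fintype.card_ne_zero
  ext i
  simp [centeringMatrix, mulVec, dotProduct, one_apply, hcard]

end Centering

theorem posDef_smul_one_add_transpose_mul_self {m n : Type*} [Fintype m] [Fintype n]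
    [DecidableEq n] {c : ℝ} (hc : 0 < c) (Φ : Matrix m n ℝ) :
    (c • 1 + Φᵀ * Φ).PosDef :=
  (PosDef.one.smul hc).add_posSemidef (by simpa using posSemidef_conjTranspose_mul_self Φ)

end Matrix

/-- with the centering projection `Ω = I − (1/N)𝟏𝟏ᵀ` and
`S = ΩΦ(cI_D + ΦᵀΦ)⁻¹ΦᵀΩ`, one has `Ω(cI_N + ΦΦᵀ)⁻¹Ω = (1/c)(Ω − S)`; moreover `S` is
symmetric PSD and `S𝟏 = 0`. -/
theorem centered_woodbury {N D : ℕ} (hN : 0 < N)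
    (Φ : Matrix (Fin N) (Fin D) ℝ) (c : ℝ) (hc : 0 < c)
    (Ω : Matrix (Fin N) (Fin N) ℝ)
    (hΩ : Ω = 1 - (N : ℝ)⁻¹ • Matrix.of (fun _ _ : Fin N => (1 : ℝ)))
    (S : Matrix (Fin N) (Fin N) ℝ)
    (hS : S = Ω * Φ * (c • (1 : Matrix (Fin D) (Fin D) ℝ) + Φᵀ * Φ)⁻¹ * Φᵀ * Ω) :
    Ω * (c • (1 : Matrix (Fin N) (Fin N) ℝ) + Φ * Φᵀ)⁻¹ * Ω = (1 / c) • (Ω - S) ∧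
    S.PosSemidef ∧ S *ᵥ (fun _ => 1) = 0 := by
  have : Nonempty (Fin N) := Fin.pos_iff_nonempty.mp hN
  replace hΩ : Ω = centeringMatrix (Fin N) ℝ := by rw [hΩ, centeringMatrix, Fintype.card_fin]
  have hB := posDef_smul_one_add_transpose_mul_self hc Φ
  refine ⟨?_, ?_, ?_⟩
  · rw [inv_smul_one_add_mul hc.ne' Φ Φᵀ hB.isUnit, hS, Matrix.mul_smul, Matrix.smul_mul,
      Matrix.mul_sub, Matrix.sub_mul, Matrix.mul_one, hΩ, isIdempotentElem_centeringMatrix.eq,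
      one_div]
    simp only [Matrix.mul_assoc]
  · have hΩT : Ωᵀ = Ω := hΩ ▸ centeringMatrix_transpose
    have hSΦ : S = (Φᵀ * Ω)ᴴ * (c • 1 + Φᵀ * Φ)⁻¹ * (Φᵀ * Ω) := by
      rw [hS, conjTranspose_eq_transpose_of_trivial, transpose_mul, hΩT, transpose_transpose,
        Matrix.mul_assoc _ Φᵀ Ω]
    rw [hSΦ]
    exact hB.posSemidef.inv.conjTranspose_mul_mul_same _
  · rw [hS, ← mulVec_mulVec, hΩ, centeringMatrix_mulVec_one, mulVec_zero]
end
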